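/- Let r = [0; c_1, ..., c_L] be rational with all partial quotients c_i ≤ M for i ≤ ℓ+2, where ℓ ≤ L-2, and let ε_ℓ be an admissible perturbation with respect to r and ℓ. Then ε_ℓ + λ_ℓ > 1/(M + C)² for an absolute constant C, where λ_ℓ = q_ℓ ‖q_ℓ r‖. -/

import Mathlib

open Finset

/-- Value of a finite continued fraction `[0; x₁, x₂, ...]`. -/
noncomputable def cfVal : List ℕ → ℝ
  | [] => 0
  | x :: xs => 1 / ((x : ℝ) + cfVal xs)

/-- Ostrowski digit conditions for `N` with respect to partial quotients `c`
and convergent denominators `q`, for expansions of length `L`. -/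
def IsOstrowski (c q : ℕ → ℕ) (L N : ℕ) (b : ℕ → ℕ) : Prop :=
  (N = ∑ i ∈ range L, b i * q i) ∧
  b 0 < c 1 ∧
  (∀ i, 1 ≤ i → b i ≤ c (i + 1)) ∧
  (∀ i, 1 ≤ i → b i = c (i + 1) → b (i - 1) = 0) ∧
  (∀ i, L ≤ i → b i = 0)

lemma cfVal_bounds : ∀ xs : List ℕ, (∀ x ∈ xs, 1 ≤ x) → 0 ≤ cfVal xs ∧ cfVal xs ≤ 1
  | [], _ => by simp [cfVal]
  | x :: xs, h => by
    have hx : 1 ≤ x := h x (by simp)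
    have ih := cfVal_bounds xs (fun y hy => h y (by simp [hy]))
    have hx' : (1:ℝ) ≤ x := by exact_mod_cast hx
    have hd : (1:ℝ) ≤ (x:ℝ) + cfVal xs := by linarith [ih.1]
    refine ⟨?_, ?_⟩
    · simp only [cfVal]
      exact div_nonneg zero_le_one (by linarith)
    · simp only [cfVal]
      rw [div_le_one (by linarith)]; linarith

def pAux (c : ℕ → ℕ) : ℕ → ℕ
  | 0 => 0
  | 1 => 1
  | (n+2) => c (n+2) * pAux c (n+1) + pAux c n

lemma round_eq_of_abs' {x : ℝ} {n : ℤ} (h : |x - n| < 1/2) : round x = n := by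
  have h' := abs_lt.mp h
  rw [round_eq]
  apply Int.floor_eq_iff.mpr
  constructor
  · linarith [h'.1]
  · push_cast; linarith [h'.2]

noncomputable def tAux (c : ℕ → ℕ) (L i : ℕ) : ℝ :=
  cfVal ((List.range (L - i)).map (fun j => c (i + 1 + j)))

lemma tAux_tail (c : ℕ → ℕ) (L i : ℕ) (hi : i < L) :
    tAux c L i = 1 / ((c (i+1) : ℝ) + tAux c L (i+1)) := by
  have h1 : L - i = (L - (i+1)) + 1 := by omega
  unfold tAux
  rw [h1, List.range_succ_eq_map, List.map_cons, List.map_map]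
  have h2 : List.map ((fun j => c (i + 1 + j)) ∘ Nat.succ) (List.range (L - (i+1)))
      = List.map (fun j => c (i + 1 + 1 + j)) (List.range (L - (i+1))) := by
    apply List.map_congr_left
    intro a _
    simp only [Function.comp]
    congr 1
    omega
  rw [h2]
  simp [cfVal]

noncomputable def betaAux (c : ℕ → ℕ) (L i : ℕ) : ℝ := ∏ j ∈ range (i+1), tAux c L j

lemma betaAux_succ (c : ℕ → ℕ) (L i : ℕ) :
    betaAux c L (i+1) = betaAux c L i * tAux c L (i+1) := Finset.prod_range_succ _ _

noncomputable def fAux (c : ℕ → ℕ) (L ℓ m : ℕ) (b : ℕ → ℕ) (k : ℕ) : ℝ :=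
  (-1:ℝ)^k * ∑ j ∈ Icc k m, (-1:ℝ)^j * (b (ℓ+j) : ℝ) * betaAux c L (ℓ+j)

lemma fAux_of_gt (c : ℕ → ℕ) (L ℓ m : ℕ) (b : ℕ → ℕ) (k : ℕ) (h : m < k) :
    fAux c L ℓ m b k = 0 := by
  unfold fAux
  rw [Finset.Icc_eq_empty (by omega)]
  simp

lemma fAux_rec (c : ℕ → ℕ) (L ℓ m : ℕ) (b : ℕ → ℕ) (k : ℕ) (h : k ≤ m) :
    fAux c L ℓ m b k = (b (ℓ+k) : ℝ) * betaAux c L (ℓ+k) - fAux c L ℓ m b (k+1) := by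
  unfold fAux
  rw [← Finset.Ioc_insert_left h, Finset.sum_insert Finset.left_notMem_Ioc, ← Finset.Icc_add_one_left_eq_Ioc]
  simp -failIfUnchanged only [Nat.succ_eq_add_one]
  have h4 : ((-1:ℝ)^k) * ((-1:ℝ)^k) = 1 := by rw [← mul_pow]; norm_num
  rw [pow_succ]
  linear_combination ((b (ℓ+k) : ℝ) * betaAux c L (ℓ+k)) * h4

set_option maxHeartbeats 1000000 in
theorem stmt9 :
    ∃ C : ℝ, 0 < C ∧
      ∀ (M L ℓ : ℕ) (c q : ℕ → ℕ) (r : ℝ) (δ : ℕ → ℝ),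
        (∀ i, 1 ≤ i → i ≤ L → 1 ≤ c i) → 2 ≤ c L → 1 ≤ L →
        r = cfVal ((List.range L).map (fun i => c (i + 1))) →
        q 0 = 1 → q 1 = c 1 →
        (∀ i, 1 ≤ i → q (i + 1) = c (i + 1) * q i + q (i - 1)) →
        (∀ i, δ i = |(q i : ℝ) * r - ((round ((q i : ℝ) * r) : ℤ) : ℝ)|) →
        ℓ + 2 ≤ L →
        (∀ i, 1 ≤ i → i ≤ ℓ + 2 → c i ≤ M) →
        ∀ (N : ℕ) (b : ℕ → ℕ), N < q L → IsOstrowski c q L N b →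
          ∀ s : ℕ, s < b ℓ →
            (q ℓ : ℝ) * ((s : ℝ) * δ ℓ +
                ∑ j ∈ Icc 1 (L - 1 - ℓ), (-1 : ℝ) ^ j * (b (ℓ + j) : ℝ) * δ (ℓ + j))
              + (q ℓ : ℝ) * δ ℓ > 1 / ((M : ℝ) + C) ^ 2 := by
  refine ⟨2, by norm_num, ?_⟩
  intro M L ℓ c q r δ hc hcL hL1 hr hq0 hq1 hqrec hδ hℓ hM N b hN hOst s hs
  obtain ⟨-, hb0, hble, hbrule, -⟩ := hOst
  set m := L - 1 - ℓ with hmdef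
  have hmL : ℓ + m + 1 = L := by omega
  have hm1 : 1 ≤ m := by omega
  have hbl1 : 1 ≤ b ℓ := by omega
  -- basic facts about t
  have ht01 : ∀ i, 0 ≤ tAux c L i ∧ tAux c L i ≤ 1 := by
    intro i
    apply cfVal_bounds
    intro x hx
    simp only [List.mem_map, List.mem_range] at hx
    obtain ⟨j, hj, rfl⟩ := hx
    exact hc _ (by omega) (by omega)
  have ht_pos : ∀ i, i < L → 0 < tAux c L i := by
    intro i hi
    rw [tAux_tail c L i hi]
    have h1 := (ht01 (i+1)).1
    have h2 : 1 ≤ c (i+1) := hc _ (by omega) (by omega)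
    have h2' : (1:ℝ) ≤ (c (i+1) : ℝ) := by exact_mod_cast h2
    apply div_pos one_pos; linarith
  have ht_lt1 : ∀ i, i < L → tAux c L i < 1 := by
    intro i hi
    rw [tAux_tail c L i hi]
    have h1 := (ht01 (i+1)).1
    have h2 : 1 ≤ c (i+1) := hc _ (by omega) (by omega)
    have h2' : (1:ℝ) ≤ (c (i+1) : ℝ) := by exact_mod_cast h2
    rw [div_lt_one (by linarith)]
    rcases Nat.lt_or_ge (i+1) L with hiL | hiL
    · have := ht_pos (i+1) hiL
      linarith
    · have hiL' : i + 1 = L := by omega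
      have : 2 ≤ c (i+1) := by rw [hiL']; exact hcL
      have : (2:ℝ) ≤ (c (i+1) : ℝ) := by exact_mod_cast this
      linarith
  -- basic facts about β
  have hβnn : ∀ i, 0 ≤ betaAux c L i := by
    intro i
    exact Finset.prod_nonneg (fun j _ => (ht01 j).1)
  have hβanti1 : ∀ i, betaAux c L (i+1) ≤ betaAux c L i := by
    intro i
    rw [betaAux_succ]
    exact mul_le_of_le_one_right (hβnn i) (ht01 (i+1)).2
  have hβanti : ∀ i j, i ≤ j → betaAux c L j ≤ betaAux c L i := by
    intro i j h
    induction j, h using Nat.le_induction with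
    | base => exact le_rfl
    | succ n hn ih => exact le_trans (hβanti1 n) ih
  have hβpos : ∀ i, i ≤ L - 1 → 0 < betaAux c L i := by
    intro i hi
    apply Finset.prod_pos
    intro j hj
    simp only [Finset.mem_range] at hj
    exact ht_pos j (by omega)
  have hβrec : ∀ i, i + 1 ≤ L - 1 →
      betaAux c L i = (c (i+2) : ℝ) * betaAux c L (i+1) + betaAux c L (i+2) := by
    intro i hi
    have hi2 : i + 1 < L := by omega
    have htt := tAux_tail c L (i+1) hi2
    have hd : (0:ℝ) < (c (i+2) : ℝ) + tAux c L (i+2) := by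
      have h1 := (ht01 (i+2)).1
      have h2 : 1 ≤ c (i+2) := hc _ (by omega) (by omega)
      have h2' : (1:ℝ) ≤ (c (i+2) : ℝ) := by exact_mod_cast h2
      linarith
    have h1 : tAux c L (i+1) * ((c (i+2) : ℝ) + tAux c L (i+2)) = 1 := by
      rw [htt]; field_simp
    rw [betaAux_succ c L (i+1), betaAux_succ c L i]
    linear_combination (-(betaAux c L i)) * h1
  -- q facts
  have hqm : ∀ i, i + 1 ≤ L → q i ≤ q (i+1) ∧ 1 ≤ q i := by
    intro i
    induction i with
    | zero =>
      intro h
      rw [hq0, hq1]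
      exact ⟨hc 1 le_rfl (by omega), le_rfl⟩
    | succ n ih =>
      intro h
      show q (n+1) ≤ q (n+2) ∧ 1 ≤ q (n+1)
      have ihh := ih (by omega)
      have hrec := hqrec (n+1) (by omega)
      simp only [Nat.add_sub_cancel] at hrec
      have hcn : 1 ≤ c (n+2) := hc _ (by omega) (by omega)
      have hrec' : q (n+2) = c (n+2) * q (n+1) + q n := hrec
      constructor
      · have h1 : 1 * q (n+1) ≤ c (n+2) * q (n+1) := Nat.mul_le_mul_right _ hcn
        omega
      · omega
  -- convergent identity
  have hr0 : r = tAux c L 0 := by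
    rw [hr]
    unfold tAux
    congr 1
    rw [Nat.sub_zero]
    apply List.map_congr_left
    intro a _
    congr 1
    omega
  have hqr2 : ∀ n, n + 1 ≤ L →
      ((q n : ℝ) * r - (pAux c n : ℝ) = (-1)^n * betaAux c L n ∧
       (q (n+1) : ℝ) * r - (pAux c (n+1) : ℝ) = (-1)^(n+1) * betaAux c L (n+1)) := by
    intro n
    induction n with
    | zero =>
      intro h
      have ht0 := tAux_tail c L 0 (by omega)
      have hd : (0:ℝ) < (c 1 : ℝ) + tAux c L 1 := by
        have h1 := (ht01 1).1
        have h2 : 1 ≤ c 1 := hc _ le_rfl (by omega)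
        have h2' : (1:ℝ) ≤ (c 1 : ℝ) := by exact_mod_cast h2
        linarith
      have h1 : tAux c L 0 * ((c 1 : ℝ) + tAux c L 1) = 1 := by
        rw [ht0]; field_simp
      constructor
      · rw [hq0, hr0]
        simp [pAux, betaAux]
      · rw [hq1, hr0]
        have hβ1 : betaAux c L 1 = tAux c L 0 * tAux c L 1 := by
          unfold betaAux
          rw [Finset.prod_range_succ, Finset.prod_range_one]
        simp only [pAux, pow_one]
        rw [hβ1]
        push_cast
        linear_combination h1
    | succ n ih =>
      intro h
      obtain ⟨e1, e2⟩ := ih (by omega)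
      refine ⟨e2, ?_⟩
      have hrec := hqrec (n+1) (by omega)
      simp only [Nat.add_sub_cancel] at hrec
      have hβr := hβrec n (by omega)
      have hp : (pAux c (n+2) : ℝ) = (c (n+2) : ℝ) * (pAux c (n+1) : ℝ) + (pAux c n : ℝ) := by
        rw [show pAux c (n+2) = c (n+2) * pAux c (n+1) + pAux c n from rfl]
        push_cast; ring
      rw [hrec, hp]
      push_cast
      simp only [pow_succ] at e2 ⊢
      linear_combination ((c (n+2) : ℝ)) * e2 + e1 + ((-1:ℝ)^n) * hβr
  -- the identity q_{i+1} β_i + q_i β_{i+1} = 1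
  have hone : ∀ i, i + 1 ≤ L →
      (q (i+1) : ℝ) * betaAux c L i + (q i : ℝ) * betaAux c L (i+1) = 1 := by
    intro i
    induction i with
    | zero =>
      intro h
      have ht0 := tAux_tail c L 0 (by omega)
      have hd : (0:ℝ) < (c 1 : ℝ) + tAux c L 1 := by
        have h1 := (ht01 1).1
        have h2 : 1 ≤ c 1 := hc _ le_rfl (by omega)
        have h2' : (1:ℝ) ≤ (c 1 : ℝ) := by exact_mod_cast h2
        linarith
      have h1 : tAux c L 0 * ((c 1 : ℝ) + tAux c L 1) = 1 := by
        rw [ht0]; field_simp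
      have hβ0 : betaAux c L 0 = tAux c L 0 := by
        unfold betaAux; rw [Finset.prod_range_one]
      have hβ1 : betaAux c L 1 = tAux c L 0 * tAux c L 1 := by
        unfold betaAux
        rw [Finset.prod_range_succ, Finset.prod_range_one]
      rw [hq0, hq1, hβ0, hβ1]
      push_cast
      linear_combination h1
    | succ n ih =>
      intro h
      have ihh := ih (by omega)
      have hrec := hqrec (n+1) (by omega)
      simp only [Nat.add_sub_cancel] at hrec
      have htt := tAux_tail c L (n+1) (by omega)
      have hd : (0:ℝ) < (c (n+2) : ℝ) + tAux c L (n+2) := by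
        have h1 := (ht01 (n+2)).1
        have h2 : 1 ≤ c (n+2) := hc _ (by omega) (by omega)
        have h2' : (1:ℝ) ≤ (c (n+2) : ℝ) := by exact_mod_cast h2
        linarith
      have h1 : tAux c L (n+1) * ((c (n+2) : ℝ) + tAux c L (n+2)) = 1 := by
        rw [htt]; field_simp
      rw [betaAux_succ c L n] at ihh
      rw [hrec, betaAux_succ c L (n+1), betaAux_succ c L n]
      push_cast
      linear_combination ihh + ((q (n+1) : ℝ) * betaAux c L n) * h1
  -- δ = β for small β
  have hδβ : ∀ i, i + 1 ≤ L → betaAux c L i < 1/2 → δ i = betaAux c L i := by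
    intro i hi hhalf
    have e := (hqr2 i hi).1
    have habs : |(q i : ℝ) * r - (pAux c i : ℝ)| = betaAux c L i := by
      rw [e, abs_mul, abs_pow, abs_neg, abs_one, one_pow, one_mul,
        abs_of_nonneg (hβnn i)]
    have hrd : round ((q i : ℝ) * r) = (pAux c i : ℤ) := by
      apply round_eq_of_abs'
      push_cast
      rw [habs]
      exact hhalf
    rw [hδ i, hrd]
    push_cast
    rw [habs]
  -- β 1 < 1/2
  have hβ1lt : betaAux c L 1 < 1/2 := by
    have ht0 := tAux_tail c L 0 (by omega)
    have ht1lt := ht_lt1 1 (by omega)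
    have ht1nn := (ht01 1).1
    have h2 : 1 ≤ c 1 := hc _ le_rfl (by omega)
    have h2' : (1:ℝ) ≤ (c 1 : ℝ) := by exact_mod_cast h2
    have hd : (0:ℝ) < (c 1 : ℝ) + tAux c L 1 := by linarith
    have hβ1 : betaAux c L 1 = tAux c L 1 / ((c 1 : ℝ) + tAux c L 1) := by
      unfold betaAux
      rw [Finset.prod_range_succ, Finset.prod_range_one, ht0]
      ring
    rw [hβ1, div_lt_iff₀ hd]
    nlinarith
  -- δ ℓ = β ℓ
  have hδl : δ ℓ = betaAux c L ℓ := by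
    rcases Nat.eq_zero_or_pos ℓ with h0 | h0
    · subst h0
      have hc12 : 2 ≤ c 1 := by omega
      have ht0 := tAux_tail c L 0 (by omega)
      have ht1p := ht_pos 1 (by omega)
      have hc12' : (2:ℝ) ≤ (c 1 : ℝ) := by exact_mod_cast hc12
      have hd : (2:ℝ) < (c 1 : ℝ) + tAux c L 1 := by linarith
      have hβ0 : betaAux c L 0 = tAux c L 0 := by
        unfold betaAux; rw [Finset.prod_range_one]
      apply hδβ 0 (by omega)
      rw [hβ0, ht0]
      rw [div_lt_iff₀ (by linarith)]
      linarith
    · exact hδβ ℓ (by omega) (lt_of_le_of_lt (hβanti 1 ℓ h0) hβ1lt)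
  -- replace δ by β in the sum
  have hsum : ∑ j ∈ Icc 1 m, (-1:ℝ)^j * (b (ℓ+j) : ℝ) * δ (ℓ+j) = - fAux c L ℓ m b 1 := by
    have hcongr : ∀ j ∈ Icc 1 m, (-1:ℝ)^j * (b (ℓ+j) : ℝ) * δ (ℓ+j)
        = (-1:ℝ)^j * (b (ℓ+j) : ℝ) * betaAux c L (ℓ+j) := by
      intro j hj
      simp only [Finset.mem_Icc] at hj
      rw [hδβ (ℓ+j) (by omega) (lt_of_le_of_lt (hβanti 1 (ℓ+j) (by omega)) hβ1lt)]
    rw [Finset.sum_congr rfl hcongr]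
    unfold fAux
    rw [pow_one]
    ring
  -- the key downward induction
  have key : ∀ d k, m = k + d →
      (-(betaAux c L (ℓ+k+1)) ≤ fAux c L ℓ m b (k+1) ∧
       fAux c L ℓ m b (k+1) ≤ betaAux c L (ℓ+k) ∧
       (b (ℓ+k+1) < c (ℓ+k+2) →
         fAux c L ℓ m b (k+1) ≤ betaAux c L (ℓ+k) - betaAux c L (ℓ+k+1))) := by
    intro d
    induction d with
    | zero =>
      intro k hk
      have hk' : k = m := by omega
      rw [fAux_of_gt c L ℓ m b (k+1) (by omega)]
      refine ⟨by linarith [hβnn (ℓ+k+1)], hβnn (ℓ+k), fun _ => ?_⟩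
      have := hβanti1 (ℓ+k)
      linarith
    | succ d ih =>
      intro k hk
      obtain ⟨il0, iu0, -⟩ := ih (k+1) (by omega)
      have il : -(betaAux c L (ℓ+k+2)) ≤ fAux c L ℓ m b (k+2) := il0
      have iu : fAux c L ℓ m b (k+2) ≤ betaAux c L (ℓ+k+1) := iu0
      have hrec : fAux c L ℓ m b (k+1)
          = (b (ℓ+k+1) : ℝ) * betaAux c L (ℓ+k+1) - fAux c L ℓ m b (k+2) :=
        fAux_rec c L ℓ m b (k+1) (by omega)
      have hβr : betaAux c L (ℓ+k) = (c (ℓ+k+2) : ℝ) * betaAux c L (ℓ+k+1) + betaAux c L (ℓ+k+2) :=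
        hβrec (ℓ+k) (by omega)
      have hbc : b (ℓ+k+1) ≤ c (ℓ+k+2) := hble (ℓ+k+1) (by omega)
      have hbc' : (b (ℓ+k+1) : ℝ) ≤ (c (ℓ+k+2) : ℝ) := by exact_mod_cast hbc
      have hbnn : (0:ℝ) ≤ (b (ℓ+k+1) : ℝ) := by positivity
      have hβnn1 := hβnn (ℓ+k+1)
      have hβnn2 := hβnn (ℓ+k+2)
      have hprod : (b (ℓ+k+1) : ℝ) * betaAux c L (ℓ+k+1)
          ≤ (c (ℓ+k+2) : ℝ) * betaAux c L (ℓ+k+1) :=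
        mul_le_mul_of_nonneg_right hbc' hβnn1
      refine ⟨?_, ?_, ?_⟩
      · rw [hrec]
        nlinarith [mul_nonneg hbnn hβnn1]
      · rw [hrec]
        linarith
      · intro hlt
        have hlt' : (b (ℓ+k+1) : ℝ) + 1 ≤ (c (ℓ+k+2) : ℝ) := by exact_mod_cast hlt
        have hprod2 : (b (ℓ+k+1) : ℝ) * betaAux c L (ℓ+k+1)
            ≤ ((c (ℓ+k+2) : ℝ) - 1) * betaAux c L (ℓ+k+1) :=
          mul_le_mul_of_nonneg_right (by linarith) hβnn1
        rw [hrec]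
        linarith
  obtain ⟨-, -, hs1⟩ := key m 0 (by omega)
  simp only [Nat.add_zero] at hs1
  have hblt : b (ℓ+1) < c (ℓ+2) := by
    by_contra hcon
    have h1 : b (ℓ+1) ≤ c (ℓ+2) := hble (ℓ+1) (by omega)
    have h2 : b (ℓ+1) = c (ℓ+2) := by omega
    have h3 : b ℓ = 0 := hbrule (ℓ+1) (by omega) h2
    omega
  have hf1 : fAux c L ℓ m b 1 ≤ betaAux c L ℓ - betaAux c L (ℓ+1) := hs1 hblt
  -- lower bound on q ℓ * β (ℓ+1)
  have hQ := hone (ℓ+1) (by omega)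
  have e6 : ℓ + 1 + 1 = ℓ + 2 := rfl
  rw [e6] at hQ
  have hβ21 : betaAux c L (ℓ+2) ≤ betaAux c L (ℓ+1) := by
    have := hβanti1 (ℓ+1)
    rw [e6] at this
    exact this
  have hql1 : 1 ≤ q ℓ := (hqm ℓ (by omega)).2
  have hql1' : (1:ℝ) ≤ (q ℓ : ℝ) := by exact_mod_cast hql1
  have hqlp : (0:ℝ) ≤ (q ℓ : ℝ) := by linarith
  have hql11 : 1 ≤ q (ℓ+1) := (hqm (ℓ+1) (by omega)).2
  have hql11' : (1:ℝ) ≤ (q (ℓ+1) : ℝ) := by exact_mod_cast hql11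
  have hM1 : (1:ℝ) ≤ (M : ℝ) := by
    have h1 : 1 ≤ c 1 := hc _ le_rfl (by omega)
    have h2 : c 1 ≤ M := hM 1 le_rfl (by omega)
    exact_mod_cast le_trans h1 h2
  have hq2R : (q (ℓ+2) : ℝ) ≤ (M : ℝ) * (q (ℓ+1) : ℝ) + (q ℓ : ℝ) := by
    have hrec := hqrec (ℓ+1) (by omega)
    simp only [Nat.add_sub_cancel] at hrec
    rw [e6] at hrec
    have hcM : c (ℓ+2) ≤ M := hM (ℓ+2) (by omega) le_rfl
    have hcM' : (c (ℓ+2) : ℝ) ≤ (M : ℝ) := by exact_mod_cast hcM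
    have : (q (ℓ+2) : ℝ) = (c (ℓ+2) : ℝ) * (q (ℓ+1) : ℝ) + (q ℓ : ℝ) := by
      rw [hrec]; push_cast; ring
    rw [this]
    nlinarith
  have hq1R : (q (ℓ+1) : ℝ) ≤ ((M : ℝ) + 1) * (q ℓ : ℝ) := by
    rcases Nat.eq_zero_or_pos ℓ with h0 | h0
    · subst h0
      have hcM : c 1 ≤ M := hM 1 le_rfl (by omega)
      have hcM' : (c 1 : ℝ) ≤ (M : ℝ) := by exact_mod_cast hcM
      rw [hq1, hq0]
      push_cast
      nlinarith
    · obtain ⟨n, rfl⟩ := Nat.exists_eq_add_of_le h0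
      have hrec := hqrec (n+1) (by omega)
      simp only [Nat.add_sub_cancel] at hrec
      have hcM : c (n+2) ≤ M := hM (n+2) (by omega) (by omega)
      have hcM' : (c (n+2) : ℝ) ≤ (M : ℝ) := by exact_mod_cast hcM
      have hmono : q n ≤ q (n+1) := (hqm n (by omega)).1
      have hmono' : (q n : ℝ) ≤ (q (n+1) : ℝ) := by exact_mod_cast hmono
      have hqn1 : 1 ≤ q (n+1) := (hqm (n+1) (by omega)).2
      have hqn1' : (1:ℝ) ≤ (q (n+1) : ℝ) := by exact_mod_cast hqn1
      have he : (1:ℕ) + n = n + 1 := by omega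
      rw [he]
      have he2 : n + 1 + 1 = n + 2 := rfl
      rw [he2]
      have : (q (n+2) : ℝ) = (c (n+2) : ℝ) * (q (n+1) : ℝ) + (q n : ℝ) := by
        rw [hrec]; push_cast; ring
      rw [this]
      nlinarith
  have hβ1p : 0 < betaAux c L (ℓ+1) := hβpos (ℓ+1) (by omega)
  have hchain : (1:ℝ) / ((M : ℝ) + 2)^2 < (q ℓ : ℝ) * betaAux c L (ℓ+1) := by
    have hQsum : (1:ℝ) ≤ ((q (ℓ+1) : ℝ) + (q (ℓ+2) : ℝ)) * betaAux c L (ℓ+1) := by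
      nlinarith [mul_le_mul_of_nonneg_left hβ21 (by linarith : (0:ℝ) ≤ (q (ℓ+1) : ℝ))]
    have hQle : (q (ℓ+1) : ℝ) + (q (ℓ+2) : ℝ) < ((M : ℝ) + 2)^2 * (q ℓ : ℝ) := by
      nlinarith [mul_le_mul_of_nonneg_left hq1R (by linarith : (0:ℝ) ≤ (M : ℝ))]
    have hd2 : (0:ℝ) < ((M : ℝ) + 2)^2 := by positivity
    rw [div_lt_iff₀ hd2]
    nlinarith [mul_lt_mul_of_pos_right hQle hβ1p]
  -- final assembly
  rw [hδl, hsum]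
  have hsnn : (0:ℝ) ≤ (s : ℝ) * betaAux c L ℓ := mul_nonneg (by positivity) (hβnn ℓ)
  have hinner : betaAux c L (ℓ+1)
      ≤ (s : ℝ) * betaAux c L ℓ + -(fAux c L ℓ m b 1) + betaAux c L ℓ := by
    linarith
  have hfin := mul_le_mul_of_nonneg_left hinner hqlp
  nlinarith [hchain, hfin]
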